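/- arXiv:2403.16109 — 2 statements merged into one kernel-verified Lean document; each statement's English description precedes it below -/
import Mathlib

section
/- Let G be a strong quasi-n-partite graph such that m_i ≥ 2 for at least one index i, and let I(G) ⊂ T be its edge ideal. Then I(G) is not integrally closed, i.e., I(G) ≠ I(G)̄; in fact, for any part V_i containing two distinct vertices x_{ir}, x_{ir'}, the monomial x_{ir}x_{ir'} belongs to I(G)̄ but not to I(G). -/
open MvPolynomial

/-- `f` is integral over the ideal `I`: it satisfies an equation
`f^k + c₁ f^(k-1) + ⋯ + c_k = 0` with `c_j ∈ I^j`. -/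
def Ideal.IsIntegralElemOver {R : Type*} [CommRing R] (I : Ideal R) (f : R) : Prop :=
  ∃ k : ℕ, 0 < k ∧ ∃ c : ℕ → R, (∀ j, 1 ≤ j → j ≤ k → c j ∈ I ^ j) ∧
    f ^ k + ∑ j ∈ Finset.Icc 1 k, c j * f ^ (k - j) = 0

/-- The integral closure of an ideal `I`, the ideal of all elements integral over `I`. -/
def Ideal.intClosure {R : Type*} [CommRing R] (I : Ideal R) : Ideal R :=
  Ideal.span {f | I.IsIntegralElemOver f}

/-- The edge ideal of the strong quasi-`n`-partite graph: the complete `n`-partite graph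
on `V₁ ∪ ⋯ ∪ Vₙ`, `Vᵢ = {x_{i1}, …, x_{im_i}}`, with a loop at every vertex; it is
generated by the `x_{ih} x_{i'h'}` with `i ≠ i'` and the `x_{ih}²`. -/
noncomputable def edgeIdealSQ (K : Type*) [Field K] (n : ℕ) (m : Fin n → ℕ) :
    Ideal (MvPolynomial (Σ i : Fin n, Fin (m i)) K) :=
  Ideal.span
    ({f | ∃ (i i' : Fin n) (h : Fin (m i)) (h' : Fin (m i')),
        i ≠ i' ∧ f = X ⟨i, h⟩ * X ⟨i', h'⟩} ∪
     {f | ∃ (i : Fin n) (h : Fin (m i)), f = X ⟨i, h⟩ ^ 2})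

/-! `x_{ir} x_{ir'}` is integral over `I(G)`: its square `x_{ir}² x_{ir'}²` is a product of two
generators, hence lies in `I(G)²`. It is not in `I(G)`: a monomial lies in a monomial ideal only
if some generator divides it, and the only degree-two monomial dividing `x_{ir} x_{ir'}` is
itself, which is not an edge since both vertices lie in `Vᵢ`. -/

theorem Finsupp.eq_or_eq_of_single_add_single_le {σ : Type*} {u v a b : σ}
    (h : single u 1 + single v 1 ≤ single a 1 + single b 1) :
    (u = a ∧ v = b) ∨ (u = b ∧ v = a) := by
  classical
  have hle := orderIsoMultiset.le_iff_le.2 h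
  simp only [coe_orderIsoMultiset, toMultiset_add, toMultiset_single, one_nsmul] at hle
  have heq := Multiset.eq_of_le_of_card_le hle (by simp)
  simp only [Multiset.singleton_add, Multiset.cons_eq_cons, Multiset.singleton_inj,
    Multiset.singleton_eq_cons_iff] at heq
  rcases heq with huv | ⟨-, _, ⟨rfl, -⟩, rfl, -⟩
  · exact .inl huv
  · exact .inr ⟨rfl, rfl⟩

namespace Ideal

variable {R : Type*} [CommRing R] {I : Ideal R}

theorem isIntegralElemOver_of_pow_mem_pow {f : R} {k : ℕ} (hk : 0 < k) (hf : f ^ k ∈ I ^ k) :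
    I.IsIntegralElemOver f := by
  refine ⟨k, hk, fun j => if j = k then -f ^ k else 0, fun j _ _ => ?_, ?_⟩
  · dsimp only
    split_ifs with hj
    · subst hj
      exact neg_mem hf
    · exact zero_mem _
  · rw [Finset.sum_eq_single_of_mem k (Finset.right_mem_Icc.2 hk) fun j _ hj => by simp [hj]]
    simp

theorem mul_mem_intClosure_of_sq_mem {x y : R} (hx : x ^ 2 ∈ I) (hy : y ^ 2 ∈ I) :
    x * y ∈ I.intClosure :=
  subset_span <| isIntegralElemOver_of_pow_mem_pow two_pos <| by
    rw [mul_pow, sq I]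
    exact mul_mem_mul hx hy

end Ideal

namespace MvPolynomial

variable {σ R : Type*} [CommSemiring R]

theorem X_mul_X_eq_monomial (u v : σ) :
    (X u * X v : MvPolynomial σ R) = monomial (Finsupp.single u 1 + Finsupp.single v 1) 1 := by
  rw [X, X, monomial_mul, one_mul]

theorem rel_of_X_mul_X_mem_span [Nontrivial R] {E : σ → σ → Prop} {a b : σ}
    (h : X a * X b ∈ Ideal.span {f : MvPolynomial σ R | ∃ u v, E u v ∧ f = X u * X v}) :
    E a b ∨ E b a := by
  classical
  have hgens : {f : MvPolynomial σ R | ∃ u v, E u v ∧ f = X u * X v} =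
      (fun s => monomial s 1) ''
        {s | ∃ u v, E u v ∧ s = Finsupp.single u 1 + Finsupp.single v 1} := by
    ext f
    simp only [Set.mem_ofPred_eq, Set.mem_image, X_mul_X_eq_monomial]
    constructor
    · rintro ⟨u, v, huv, rfl⟩
      exact ⟨_, ⟨u, v, huv, rfl⟩, rfl⟩
    · rintro ⟨_, ⟨u, v, huv, rfl⟩, rfl⟩
      exact ⟨u, v, huv, rfl⟩
  rw [hgens, mem_ideal_span_monomial_image, X_mul_X_eq_monomial,
    support_monomial, if_neg one_ne_zero] at h
  obtain ⟨_, ⟨u, v, huv, rfl⟩, hle⟩ := h _ (Finset.mem_singleton_self _)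
  rcases Finsupp.eq_or_eq_of_single_add_single_le hle with ⟨rfl, rfl⟩ | ⟨rfl, rfl⟩
  · exact .inl huv
  · exact .inr huv

end MvPolynomial

theorem edgeIdealSQ_eq_span_X_mul_X (K : Type*) [Field K] (n : ℕ) (m : Fin n → ℕ) :
    edgeIdealSQ K n m =
      Ideal.span
        {f | ∃ u v : Σ i : Fin n, Fin (m i), (u.1 ≠ v.1 ∨ u = v) ∧ f = X u * X v} := by
  unfold edgeIdealSQ
  congr 1
  ext f
  constructor
  · rintro (⟨i, i', h, h', hii', rfl⟩ | ⟨i, h, rfl⟩)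
    · exact ⟨⟨i, h⟩, ⟨i', h'⟩, .inl hii', rfl⟩
    · exact ⟨⟨i, h⟩, ⟨i, h⟩, .inr rfl, sq _⟩
  · rintro ⟨u, v, hne | rfl, rfl⟩
    · exact .inl ⟨u.1, v.1, u.2, v.2, hne, rfl⟩
    · exact .inr ⟨u.1, u.2, (sq _).symm⟩

theorem X_mul_X_notMem_edgeIdealSQ {K : Type*} [Field K] {n : ℕ} {m : Fin n → ℕ} {i : Fin n}
    {r r' : Fin (m i)} (hrr' : r ≠ r') : X ⟨i, r⟩ * X ⟨i, r'⟩ ∉ edgeIdealSQ K n m := by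
  rw [edgeIdealSQ_eq_span_X_mul_X]
  intro h
  rcases rel_of_X_mul_X_mem_span h with (h | h) | (h | h) <;> simp_all

theorem X_mul_X_mem_intClosure_edgeIdealSQ {K : Type*} [Field K] {n : ℕ} {m : Fin n → ℕ}
    (u v : Σ i : Fin n, Fin (m i)) : X u * X v ∈ (edgeIdealSQ K n m).intClosure :=
  Ideal.mul_mem_intClosure_of_sq_mem (Ideal.subset_span (.inr ⟨u.1, u.2, rfl⟩))
    (Ideal.subset_span (.inr ⟨v.1, v.2, rfl⟩))

theorem stmt4_general {K : Type*} [Field K] (n : ℕ) (m : Fin n → ℕ)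
    (i : Fin n) (r r' : Fin (m i)) (hrr' : r ≠ r') :
    (X ⟨i, r⟩ * X ⟨i, r'⟩ ∈ (edgeIdealSQ K n m).intClosure ∧
      X ⟨i, r⟩ * X ⟨i, r'⟩ ∉ edgeIdealSQ K n m) ∧
    edgeIdealSQ K n m ≠ (edgeIdealSQ K n m).intClosure := by
  have hmem := X_mul_X_mem_intClosure_edgeIdealSQ (K := K) ⟨i, r⟩ ⟨i, r'⟩
  have hnotMem := X_mul_X_notMem_edgeIdealSQ (K := K) hrr'
  exact ⟨⟨hmem, hnotMem⟩, fun h => hnotMem (h ▸ hmem)⟩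

/-- If some part `Vᵢ` of a strong quasi-`n`-partite graph `G` contains two
distinct vertices `x_{ir}, x_{ir'}`, then the monomial `x_{ir} x_{ir'}` lies in the
integral closure of `I(G)` but not in `I(G)`; in particular `I(G)` is not integrally
closed. -/
theorem stmt4 {K : Type*} [Field K] (n : ℕ) (hn : 1 ≤ n) (m : Fin n → ℕ)
    (hm : ∀ i, 1 ≤ m i) (i : Fin n) (r r' : Fin (m i)) (hrr' : r ≠ r') :
    (X ⟨i, r⟩ * X ⟨i, r'⟩ ∈ (edgeIdealSQ K n m).intClosure ∧
      X ⟨i, r⟩ * X ⟨i, r'⟩ ∉ edgeIdealSQ K n m) ∧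
    edgeIdealSQ K n m ≠ (edgeIdealSQ K n m).intClosure :=
  stmt4_general n m i r r' hrr'
end

section
/- Let G be a strong quasi-n-partite graph and I(G) ⊂ T its edge ideal, with monomial generators u_1,…,u_q whose exponent vectors decompose blockwise as u_j = X_1^{a_{j,1}} ⋯ X_n^{a_{j,n}}, where a_{j,i} ∈ ℤ_{≥0}^{m_i} records the exponents of u_j in the variables x_{i1},…,x_{im_i}. Then I(G)̄ ⊆ Ĩ(G), where Ĩ(G) is the monomial ideal generated by all products X_1^{⌈α_1⌉} ⋯ X_n^{⌈α_n⌉} in which, for each i, α_i ∈ ℚ_{≥0}^{m_i} is a convex combination of a_{1,i},…,a_{q,i} and ⌈α_i⌉ denotes its componentwise ceiling. -/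
open MvPolynomial

/-!
Both ideals are compared with `𝔪²`, where `𝔪` is the ideal of the variables. Every generator of
`I(G)` has degree two, so `I(G) ⊆ 𝔪²`, and `𝔪²` is integrally closed: the order of vanishing at
the origin is an additive valuation `v`, and if `v ≥ r` on `I` but `v(f) < r`, then in an integral
equation `f^k = -∑ c_j f^(k-j)` with `c_j ∈ I^j` every term on the right has valuation
`> k v(f) = v(f^k)`. Conversely, the loops `x_s²` are among the generators, and the exponent
vector of `x_s x_t` is the midpoint of those of `x_s²` and `x_t²`; being an integer vector, it is
its own ceiling, so `𝔪² ⊆ Ĩ(G)`.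
-/

theorem Finsupp.eq_of_le_of_degree_le {σ : Type*} {e d : σ →₀ ℕ} (hle : e ≤ d)
    (hdeg : d.degree ≤ e.degree) : e = d := by
  obtain ⟨c, rfl⟩ := exists_add_of_le hle
  rw [map_add] at hdeg
  rw [(Finsupp.degree_eq_zero_iff c).mp (by omega), add_zero]

namespace AddValuation

variable {R : Type*} [CommRing R] (v : AddValuation R ℕ∞) {I : Ideal R} {r : ℕ∞}

theorem nsmul_le_of_mem_pow (hI : ∀ x ∈ I, r ≤ v x) (j : ℕ) {x : R} (hx : x ∈ I ^ j) :
    j • r ≤ v x := by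
  induction j generalizing x with
  | zero => simp
  | succ j ih =>
    rw [pow_succ] at hx
    refine Submodule.mul_induction_on hx (fun y hy z hz => ?_) fun y z hy hz => ?_
    · rw [v.map_mul, succ_nsmul]
      exact add_le_add (ih hy) (hI z hz)
    · exact le_trans (le_min hy hz) (v.map_add y z)

theorem le_of_isIntegralElemOver (hI : ∀ x ∈ I, r ≤ v x) {f : R} (hf : I.IsIntegralElemOver f) :
    r ≤ v f := by
  obtain ⟨k, -, c, hc, heq⟩ := hf
  by_contra! hlt
  lift v f to ℕ using hlt.ne_top with d hd
  have hr : ((d + 1 : ℕ) : ℕ∞) ≤ r := by exact_mod_cast Order.add_one_le_of_lt hlt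
  have hterm : ∀ j ∈ Finset.Icc 1 k, ((k * d + 1 : ℕ) : ℕ∞) ≤ v (c j * f ^ (k - j)) := by
    intro j hj
    obtain ⟨hj1, hjk⟩ := Finset.mem_Icc.mp hj
    rw [v.map_mul, v.map_pow, ← hd]
    calc ((k * d + 1 : ℕ) : ℕ∞) ≤ j • ((d + 1 : ℕ) : ℕ∞) + (k - j) • (d : ℕ∞) := by
          simp only [nsmul_eq_mul]
          norm_cast
          nlinarith [Nat.sub_add_cancel hjk]
      _ ≤ v (c j) + (k - j) • (d : ℕ∞) := by
          gcongr
          exact (nsmul_le_nsmul_right hr j).trans (v.nsmul_le_of_mem_pow hI j (hc j hj1 hjk))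
  have hpow : v (f ^ k) = ((k * d : ℕ) : ℕ∞) := by
    rw [v.map_pow, ← hd]; norm_cast
  have hsum := v.map_le_sum hterm
  rw [← v.map_neg, ← eq_neg_of_add_eq_zero_left heq, hpow] at hsum
  exact absurd (Nat.cast_le.mp hsum) (by omega)

end AddValuation

namespace MvPolynomial

variable {σ R : Type*} [CommRing R] [IsDomain R]

variable (σ R) in
noncomputable def orderAddValuation : AddValuation (MvPolynomial σ R) ℕ∞ :=
  AddValuation.of (fun p => (p : MvPowerSeries σ R).order) (by simp)
    (by simp only [coe_one]; exact MvPowerSeries.weightedOrder_one _)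
    (fun p q => by simpa using MvPowerSeries.min_order_le_add)
    (fun p q => by simpa using MvPowerSeries.order_mul _ _)

theorem le_orderAddValuation_iff_mem_pow_idealOfVars (n : ℕ) (p : MvPolynomial σ R) :
    (n : ℕ∞) ≤ orderAddValuation σ R p ↔ p ∈ idealOfVars σ R ^ n := by
  rw [mem_pow_idealOfVars_iff']
  refine ⟨fun h d hd => ?_, fun h => MvPowerSeries.nat_le_order fun d hd => ?_⟩
  · rw [← coeff_coe]
    exact MvPowerSeries.coeff_of_lt_order (lt_of_lt_of_le (by exact_mod_cast hd) h)
  · rw [coeff_coe]; exact h d hd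

theorem intClosure_le_pow_idealOfVars {I : Ideal (MvPolynomial σ R)} {n : ℕ}
    (hI : I ≤ idealOfVars σ R ^ n) : I.intClosure ≤ idealOfVars σ R ^ n :=
  Ideal.span_le.mpr fun f hf => (le_orderAddValuation_iff_mem_pow_idealOfVars n f).mp <|
    (orderAddValuation σ R).le_of_isIntegralElemOver
      (fun x hx => (le_orderAddValuation_iff_mem_pow_idealOfVars n x).mpr (hI hx)) hf

theorem exists_eq_single_two_of_X_sq_mem {σ R J : Type*} [CommSemiring R] [Nontrivial R]
    {a : J → σ →₀ ℕ}
    (hI : Ideal.span (Set.range fun j => monomial (a j) (1 : R)) ≤ idealOfVars σ R ^ 2)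
    {s : σ} (hs : X s ^ 2 ∈ Ideal.span (Set.range fun j => monomial (a j) (1 : R))) :
    ∃ j, a j = Finsupp.single s 2 := by
  classical
  rw [Set.range_comp' (fun e => monomial e (1 : R)) a, X_pow_eq_monomial,
    mem_ideal_span_monomial_image] at hs
  obtain ⟨_, ⟨j, rfl⟩, hj⟩ := hs (Finsupp.single s 2) (by simp [support_monomial])
  have hdeg := hI (Ideal.subset_span ⟨j, rfl⟩)
  rw [monomial_mem_pow_idealOfVars_iff _ _ one_ne_zero] at hdeg
  exact ⟨j, Finsupp.eq_of_le_of_degree_le hj (by simpa using hdeg)⟩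

end MvPolynomial

open MvPolynomial

section CeilConvexComb

variable {R : Type*} [CommSemiring R] {ι : Type*} {κ : ι → Type*} {J : Type*} [Fintype J]

variable (R) in
/-- The ideal `Ĩ(G)`. -/
noncomputable def ceilConvexCombIdeal (a : J → (Σ i, κ i) →₀ ℕ) :
    Ideal (MvPolynomial (Σ i, κ i) R) :=
  Ideal.span {f | ∃ b : (Σ i, κ i) →₀ ℕ,
    (∀ i, ∃ w : J → ℚ, (∀ j, 0 ≤ w j) ∧ (∑ j, w j) = 1 ∧
      ∀ h : κ i, (b ⟨i, h⟩ : ℤ) = ⌈∑ j, w j * ((a j) ⟨i, h⟩ : ℚ)⌉) ∧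
    f = monomial b (1 : R)}

theorem monomial_mem_ceilConvexCombIdeal {a : J → (Σ i, κ i) →₀ ℕ} {b : (Σ i, κ i) →₀ ℕ}
    (w : J → ℚ) (hw₀ : ∀ j, 0 ≤ w j) (hw₁ : ∑ j, w j = 1)
    (hb : ∀ u, (b u : ℚ) = ∑ j, w j * (a j u : ℚ)) :
    monomial b (1 : R) ∈ ceilConvexCombIdeal R a :=
  Ideal.subset_span ⟨b, fun i => ⟨w, hw₀, hw₁, fun h => by rw [← hb, Int.ceil_natCast]⟩, rfl⟩

theorem X_mul_X_mem_ceilConvexCombIdeal {a : J → (Σ i, κ i) →₀ ℕ}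
    (ha : ∀ s, ∃ j, a j = Finsupp.single s 2) (s t : Σ i, κ i) :
    X s * X t ∈ ceilConvexCombIdeal R a := by
  classical
  obtain ⟨j₀, hj₀⟩ := ha s
  obtain ⟨j₁, hj₁⟩ := ha t
  rw [X, X, monomial_mul, one_mul]
  refine monomial_mem_ceilConvexCombIdeal (Pi.single j₀ (1 / 2) + Pi.single j₁ (1 / 2))
    (fun j => ?_) ?_ fun u => ?_
  · simp only [Pi.add_apply, Pi.single_apply]
    split_ifs <;> norm_num
  · norm_num [Finset.sum_add_distrib]
  · simp [add_mul, Finset.sum_add_distrib, Pi.single_apply, hj₀, hj₁, Finsupp.single_apply]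

theorem pow_two_idealOfVars_le_ceilConvexCombIdeal {a : J → (Σ i, κ i) →₀ ℕ}
    (ha : ∀ s, ∃ j, a j = Finsupp.single s 2) :
    idealOfVars (Σ i, κ i) R ^ 2 ≤ ceilConvexCombIdeal R a := by
  rw [pow_two, Ideal.span_mul_span', Ideal.span_le]
  rintro _ ⟨_, ⟨s, rfl⟩, _, ⟨t, rfl⟩, rfl⟩
  exact X_mul_X_mem_ceilConvexCombIdeal ha s t

end CeilConvexComb

section EdgeIdeal

variable (K : Type*) [Field K] (n : ℕ) (m : Fin n → ℕ)

theorem edgeIdealSQ_le_pow_two_idealOfVars :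
    edgeIdealSQ K n m ≤ idealOfVars (Σ i : Fin n, Fin (m i)) K ^ 2 := by
  have hX : ∀ s, X s ∈ idealOfVars (Σ i : Fin n, Fin (m i)) K := fun s =>
    Ideal.subset_span ⟨s, rfl⟩
  rw [edgeIdealSQ, Ideal.span_le, pow_two]
  rintro _ (⟨i, i', h, h', -, rfl⟩ | ⟨i, h, rfl⟩)
  · exact Ideal.mul_mem_mul (hX _) (hX _)
  · rw [pow_two]
    exact Ideal.mul_mem_mul (hX _) (hX _)

theorem X_sq_mem_edgeIdealSQ (s : Σ i : Fin n, Fin (m i)) : X s ^ 2 ∈ edgeIdealSQ K n m :=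
  Ideal.subset_span (Or.inr ⟨s.1, s.2, rfl⟩)

end EdgeIdeal

theorem stmt6_general {K : Type*} [Field K] (n : ℕ) (m : Fin n → ℕ)
    (q : ℕ) (a : Fin q → ((Σ i : Fin n, Fin (m i)) →₀ ℕ))
    (hgen : edgeIdealSQ K n m =
      Ideal.span (Set.range fun j : Fin q => monomial (a j) (1 : K))) :
    (edgeIdealSQ K n m).intClosure ≤
      Ideal.span {f : MvPolynomial (Σ i : Fin n, Fin (m i)) K |
        ∃ b : (Σ i : Fin n, Fin (m i)) →₀ ℕ,
          (∀ i : Fin n, ∃ w : Fin q → ℚ,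
            (∀ j, 0 ≤ w j) ∧ (∑ j, w j) = 1 ∧
            ∀ h : Fin (m i),
              (b ⟨i, h⟩ : ℤ) = ⌈∑ j, w j * ((a j) ⟨i, h⟩ : ℚ)⌉) ∧
          f = monomial b (1 : K)} := by
  have hloops : ∀ s, ∃ j, a j = Finsupp.single s 2 := fun s =>
    exists_eq_single_two_of_X_sq_mem (hgen ▸ edgeIdealSQ_le_pow_two_idealOfVars K n m)
      (hgen ▸ X_sq_mem_edgeIdealSQ K n m s)
  calc (edgeIdealSQ K n m).intClosure ≤ idealOfVars _ K ^ 2 :=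
        intClosure_le_pow_idealOfVars (edgeIdealSQ_le_pow_two_idealOfVars K n m)
    _ ≤ ceilConvexCombIdeal K a := pow_two_idealOfVars_le_ceilConvexCombIdeal hloops

/-- Let `u_j = monomial (a j) 1`, `j = 1, …, q`, be monomial generators of the
edge ideal `I(G)` of a strong quasi-`n`-partite graph.  Then `I(G)̄ ⊆ Ĩ(G)`, where `Ĩ(G)`
is generated by the monomials whose `i`-th block of exponents is the componentwise ceiling
`⌈αᵢ⌉` of some rational convex combination `αᵢ` of the `i`-th blocks of the `a j`. -/
theorem stmt6 {K : Type*} [Field K] (n : ℕ) (hn : 1 ≤ n) (m : Fin n → ℕ)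
    (hm : ∀ i, 1 ≤ m i) (q : ℕ) (a : Fin q → ((Σ i : Fin n, Fin (m i)) →₀ ℕ))
    (hgen : edgeIdealSQ K n m =
      Ideal.span (Set.range fun j : Fin q => monomial (a j) (1 : K))) :
    (edgeIdealSQ K n m).intClosure ≤
      Ideal.span {f : MvPolynomial (Σ i : Fin n, Fin (m i)) K |
        ∃ b : (Σ i : Fin n, Fin (m i)) →₀ ℕ,
          (∀ i : Fin n, ∃ w : Fin q → ℚ,
            (∀ j, 0 ≤ w j) ∧ (∑ j, w j) = 1 ∧
            ∀ h : Fin (m i),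
              (b ⟨i, h⟩ : ℤ) = ⌈∑ j, w j * ((a j) ⟨i, h⟩ : ℚ)⌉) ∧
          f = monomial b (1 : K)} :=
  stmt6_general n m q a hgen
end
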